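/- arXiv:2504.11525 — 2 statements merged into one kernel-verified Lean document; each statement's English description precedes it below -/
import Mathlib

section
/- Let n ≥ 1 and let x : Fin (n+1) → ℂ be injective. For each l, define ψ_l ∈ EuclideanSpace ℂ (Fin n → Fin 2) by ψ_l i = (x l) ^ (∑ j, (i j : ℕ)); each ψ_l is fully product (ψ_l i = ∏ j, (x l)^{(i j : ℕ)}). Then the span of {ψ_l : l : Fin (n+1)} equals the span of the Dicke states {D_n^k : 0 ≤ k ≤ n}. -/
/-! The vectors `ψ l` are the rows of the Vandermonde matrix of `x` in the Dicke basis: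
`ψ l = ∑ k, (x l) ^ k • D_n^k`. Since `x` is injective this matrix is invertible, so the two
families span the same subspace. -/

/-- The unnormalized `n`-qubit Dicke state with `k` excitations. -/
noncomputable def dicke (n k : ℕ) : EuclideanSpace ℂ (Fin n → Fin 2) :=
  WithLp.toLp 2 (fun i => if (∑ j, ((i j : ℕ))) = k then 1 else 0)

open Finset

section ChangeOfBasis

variable {ι R M : Type*} [Fintype ι] [CommRing R] [AddCommGroup M] [Module R M]

theorem Submodule.span_range_sum_smul_le (A : Matrix ι ι R) (v : ι → M) :
    span R (Set.range fun l => ∑ k, A l k • v k) ≤ span R (Set.range v) :=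
  span_le.mpr <| Set.range_subset_iff.mpr fun _ =>
    sum_mem fun k _ => smul_mem _ _ (subset_span ⟨k, rfl⟩)

theorem Matrix.sum_smul_sum_smul (A B : Matrix ι ι R) (v : ι → M) (k : ι) :
    ∑ l, B k l • ∑ m, A l m • v m = ∑ m, (B * A) k m • v m := by
  simp only [smul_sum, smul_smul, Matrix.mul_apply, sum_smul]
  exact sum_comm

theorem Submodule.span_range_sum_smul_eq [DecidableEq ι] {A : Matrix ι ι R} (hA : IsUnit A.det)
    (v : ι → M) : span R (Set.range fun l => ∑ k, A l k • v k) = span R (Set.range v) := by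
  refine (span_range_sum_smul_le A v).antisymm ?_
  have hv : (fun k => ∑ l, A⁻¹ k l • ∑ m, A l m • v m) = v := by
    ext k
    simp [Matrix.sum_smul_sum_smul, Matrix.nonsing_inv_mul A hA, Matrix.one_apply]
  simpa only [hv] using span_range_sum_smul_le A⁻¹ fun l => ∑ k, A l k • v k

end ChangeOfBasis

theorem sum_val_fin_two_le (n : ℕ) (i : Fin n → Fin 2) : ∑ j, (i j : ℕ) ≤ n :=
  calc ∑ j, (i j : ℕ) ≤ ∑ _j : Fin n, 1 := sum_le_sum fun j _ => Nat.lt_succ_iff.mp (i j).is_lt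
    _ = n := by simp

theorem sum_smul_dicke_apply (n : ℕ) (c : ℕ → ℂ) (i : Fin n → Fin 2) :
    (∑ k : Fin (n + 1), c k • dicke n k) i = c (∑ j, (i j : ℕ)) := by
  simp only [WithLp.ofLp_sum, WithLp.ofLp_smul, Finset.sum_apply, Pi.smul_apply, dicke,
    smul_eq_mul, mul_ite, mul_one, mul_zero]
  rw [Fin.sum_univ_eq_sum_range (fun k => if ∑ j, (i j : ℕ) = k then c k else 0), sum_ite_eq,
    if_pos (mem_range_succ_iff.mpr (sum_val_fin_two_le n i))]

theorem span_nUPB_eq_span_dicke_general (n : ℕ)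
    (x : Fin (n + 1) → ℂ) (hx : Function.Injective x)
    (ψ : Fin (n + 1) → EuclideanSpace ℂ (Fin n → Fin 2))
    (hψ : ∀ l i, ψ l i = (x l) ^ (∑ j, ((i j : ℕ)))) :
    (∀ l i, ψ l i = ∏ j, (x l) ^ ((i j : ℕ))) ∧
    Submodule.span ℂ (Set.range ψ) =
      Submodule.span ℂ {v | ∃ k ≤ n, v = dicke n k} := by
  refine ⟨fun l i => by rw [hψ, prod_pow_eq_pow_sum], ?_⟩
  have hψ_dicke : ψ = fun l => ∑ k : Fin (n + 1), x l ^ (k : ℕ) • dicke n k := by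
    ext l i
    rw [sum_smul_dicke_apply n (x l ^ ·), hψ]
  have hdicke : {v | ∃ k ≤ n, v = dicke n k} = Set.range fun k : Fin (n + 1) => dicke n k := by
    ext v
    simp [Fin.exists_iff, eq_comm]
  rw [hψ_dicke, hdicke]
  exact Submodule.span_range_sum_smul_eq (A := Matrix.vandermonde x)
    (isUnit_iff_ne_zero.mpr (Matrix.det_vandermonde_ne_zero_iff.mpr hx)) _

/-- For injective `x : Fin (n+1) → ℂ`, the fully product vectors
`ψ_l i = (x l) ^ (∑ j, i j)` span the same subspace as the Dicke states
`D_n^k`, `0 ≤ k ≤ n`. -/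
theorem span_nUPB_eq_span_dicke (n : ℕ) (hn : 1 ≤ n)
    (x : Fin (n + 1) → ℂ) (hx : Function.Injective x)
    (ψ : Fin (n + 1) → EuclideanSpace ℂ (Fin n → Fin 2))
    (hψ : ∀ l i, ψ l i = (x l) ^ (∑ j, ((i j : ℕ)))) :
    (∀ l i, ψ l i = ∏ j, (x l) ^ ((i j : ℕ))) ∧
    Submodule.span ℂ (Set.range ψ) =
      Submodule.span ℂ {v | ∃ k ≤ n, v = dicke n k} :=
  span_nUPB_eq_span_dicke_general n x hx ψ hψ
end

section
/- Let n ≥ 2 and d ≥ 1. Suppose ψ ∈ EuclideanSpace ℂ (Fin n → Fin d) is symmetric, i.e., ψ (i ∘ σ) = ψ i for every permutation σ of Fin n and every i, and suppose ψ is S-biseparable for some subset S ⊆ Fin n with S ≠ ∅ and S ≠ univ. Then ψ is fully product; in fact there exists φ : Fin d → ℂ such that ψ i = ∏ j, φ (i j) for all i. Consequently every symmetric completely entangled subspace is a genuinely entangled subspace. -/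
/-- A vector of the `n`-qudit space is *fully product* if it is a simple tensor. -/
def FullyProduct {n d : ℕ} (ψ : EuclideanSpace ℂ (Fin n → Fin d)) : Prop :=
  ∃ φ : Fin n → Fin d → ℂ, ∀ i, ψ i = ∏ j, φ j (i j)

/-- `ψ` is biseparable across the bipartition `(S, Sᶜ)` of the `n` qudits. -/
def Biseparable {n d : ℕ} (S : Set (Fin n))
    (ψ : EuclideanSpace ℂ (Fin n → Fin d)) : Prop :=
  ∃ (φ : ((j : S) → Fin d) → ℂ) (χ : ((j : ↥Sᶜ) → Fin d) → ℂ),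
    ∀ i, ψ i = φ (fun j => i j.val) * χ (fun j => i j.val)

/-- A nonzero vector is genuinely multipartite entangled if it is not biseparable
across any nontrivial bipartition. -/
def GME {n d : ℕ} (ψ : EuclideanSpace ℂ (Fin n → Fin d)) : Prop :=
  ψ ≠ 0 ∧ ∀ S : Set (Fin n), S ≠ ∅ → S ≠ Set.univ → ¬ Biseparable S ψ

/-- A vector is *symmetric* if it is invariant under all permutations of the parties. -/
def SymmetricVec {n d : ℕ} (ψ : EuclideanSpace ℂ (Fin n → Fin d)) : Prop :=
  ∀ (σ : Equiv.Perm (Fin n)) (i : Fin n → Fin d), ψ (i ∘ σ) = ψ i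

/-!
Biseparability of `ψ` across `(S, Sᶜ)` is the rank-one identity
`ψ i * ψ o = ψ (i on S, o off S) * ψ (o on S, i off S)`. By symmetry this identity survives
permuting the parties, and at base points with `ψ o ≠ 0` it survives intersecting two cuts.
Intersecting `S` with its image under the transposition of `s ∈ S` and `t ∉ S` removes `s`,
so `ψ` factors across a single party and hence across every single party. Telescoping over the
parties writes `ψ` as a product of the local factors `x ↦ ψ (o with one entry replaced by x)`.
A nonzero symmetric product does not vanish at some constant `o`, and for such `o` symmetry makes
all local factors equal; an `n`-th root absorbs the remaining scalar.
-/

open Function Finset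

section Factorization

variable {ι α M : Type*} [DecidableEq ι]

theorem Finset.piecewise_piecewise_inter (s t : Finset ι) (i o : ι → α) :
    s.piecewise (t.piecewise i o) o = (s ∩ t).piecewise i o := by
  ext a
  by_cases hs : a ∈ s <;> by_cases ht : a ∈ t <;> simp [Finset.piecewise, hs, ht]

variable [Fintype ι]

/-- The rank-one form of biseparability across `(s, sᶜ)`. Base points with `f o = 0` are excluded
so that intersecting two cuts only requires cancelling `f o`. -/
def FactorsAcross [MulZeroClass M] (f : (ι → α) → M) (s : Finset ι) : Prop :=
  ∀ o, f o ≠ 0 → ∀ i, f i * f o = f (s.piecewise i o) * f (sᶜ.piecewise i o)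

namespace FactorsAcross

variable {f : (ι → α) → M} {s t : Finset ι}

theorem piecewise [MulZeroClass M] (h : FactorsAcross f s) {o : ι → α} (ho : f o ≠ 0)
    (u : Finset ι) (i : ι → α) :
    f (u.piecewise i o) * f o = f ((s ∩ u).piecewise i o) * f ((sᶜ ∩ u).piecewise i o) := by
  rw [h o ho, piecewise_piecewise_inter, piecewise_piecewise_inter]

theorem inter [CommMonoidWithZero M] [IsCancelMulZero M] (hs : FactorsAcross f s)
    (ht : FactorsAcross f t) : FactorsAcross f (s ∩ t) := by
  intro o ho i
  have h₁ := hs o ho i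
  have h₂ := ht.piecewise ho s i
  have h₃ := hs.piecewise ho (s ∩ t)ᶜ i
  rw [inter_comm t s, show tᶜ ∩ s = s \ t by grind [mem_compl]] at h₂
  rw [show s ∩ (s ∩ t)ᶜ = s \ t by grind [mem_compl],
    show sᶜ ∩ (s ∩ t)ᶜ = sᶜ by grind [mem_compl]] at h₃
  refine mul_right_cancel₀ ho ?_
  calc f i * f o * f o = f (s.piecewise i o) * f o * f (sᶜ.piecewise i o) := by
        rw [h₁, mul_right_comm]
    _ = f ((s ∩ t).piecewise i o) * (f ((s \ t).piecewise i o) * f (sᶜ.piecewise i o)) := by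
        rw [h₂, mul_assoc]
    _ = f ((s ∩ t).piecewise i o) * f ((s ∩ t)ᶜ.piecewise i o) * f o := by
        rw [← h₃, mul_assoc]

theorem map [MulZeroClass M] (hsym : ∀ (σ : Equiv.Perm ι) (i : ι → α), f (i ∘ σ) = f i)
    (hs : FactorsAcross f s) (σ : Equiv.Perm ι) : FactorsAcross f (s.map σ.toEmbedding) := by
  intro o ho i
  have hσ : ∀ u : Finset ι,
      f ((u.map σ.toEmbedding).piecewise i o) = f (u.piecewise (i ∘ σ) (o ∘ σ)) := fun u => by
    rw [← hsym σ]
    congr 1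
    ext a
    by_cases h : a ∈ u <;> simp [Finset.piecewise, h]
  have hcompl : (s.map σ.toEmbedding)ᶜ = sᶜ.map σ.toEmbedding := by
    ext; simp [mem_map_equiv]
  rw [hcompl, hσ, hσ, ← hs _ (by rwa [hsym]), hsym, hsym]

theorem erase [CommMonoidWithZero M] [IsCancelMulZero M]
    (hsym : ∀ (σ : Equiv.Perm ι) (i : ι → α), f (i ∘ σ) = f i)
    (hs : FactorsAcross f s) {a b : ι} (ha : a ∈ s) (hb : b ∉ s) : FactorsAcross f (s.erase a) := by
  have hcut : s ∩ s.map (Equiv.swap a b).toEmbedding = s.erase a := by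
    ext c
    by_cases hca : c = a
    · subst hca; simp [hb]
    by_cases hcb : c = b
    · subst hcb; simp [hb]
    simp [mem_map_equiv, hca, Equiv.swap_apply_of_ne_of_ne hca hcb]
  exact hcut ▸ hs.inter (hs.map hsym _)

theorem exists_singleton [CommMonoidWithZero M] [IsCancelMulZero M]
    (hsym : ∀ (σ : Equiv.Perm ι) (i : ι → α), f (i ∘ σ) = f i)
    (hs : FactorsAcross f s) (hne : s.Nonempty) (hne' : sᶜ.Nonempty) :
    ∃ a, FactorsAcross f {a} := by
  induction s using Finset.induction_on with
  | empty => exact absurd hne Finset.not_nonempty_empty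
  | insert a s ha ih =>
    rcases s.eq_empty_or_nonempty with rfl | hs_ne
    · exact ⟨a, hs⟩
    obtain ⟨b, hb⟩ := hne'
    refine ih (erase_insert ha ▸ hs.erase hsym (mem_insert_self a s) (mem_compl.1 hb)) hs_ne
      ⟨b, mem_compl.2 fun h => mem_compl.1 hb (mem_insert_of_mem h)⟩

theorem singleton [MulZeroClass M] (hsym : ∀ (σ : Equiv.Perm ι) (i : ι → α), f (i ∘ σ) = f i)
    {a : ι} (ha : FactorsAcross f {a}) (b : ι) : FactorsAcross f {b} := by
  simpa using ha.map hsym (Equiv.swap a b)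

theorem mul_pow_card_eq_prod_update [CommMonoidWithZero M] (h : ∀ a, FactorsAcross f {a})
    {o : ι → α} (ho : f o ≠ 0) (i : ι → α) :
    f i * f o ^ Fintype.card ι = f o * ∏ a, f (update o a (i a)) := by
  suffices ∀ u : Finset ι, f (u.piecewise i o) * f o ^ #u = f o * ∏ a ∈ u, f (update o a (i a)) by
    simpa using this univ
  intro u
  induction u using Finset.induction_on with
  | empty => simp
  | insert a u ha ih =>
    have step := (h a).piecewise ho (insert a u) i
    rw [singleton_inter_of_mem (mem_insert_self a u), piecewise_singleton,
      show {a}ᶜ ∩ insert a u = u by grind [mem_compl]] at step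
    rw [card_insert_of_notMem ha, prod_insert ha, pow_succ, ← mul_assoc, mul_right_comm, step,
      mul_assoc, ih, mul_left_comm]

theorem apply_const_ne_zero [CommMonoidWithZero M] [NoZeroDivisors M] [Nontrivial M]
    (hsym : ∀ (σ : Equiv.Perm ι) (i : ι → α), f (i ∘ σ) = f i) (h : ∀ a, FactorsAcross f {a})
    {o : ι → α} (ho : f o ≠ 0) (b : ι) : f (fun _ => o b) ≠ 0 := by
  have hrep := mul_pow_card_eq_prod_update h ho
  have hfactor : ∀ i, f i ≠ 0 → ∀ a, f (update o a (i a)) ≠ 0 := fun i hi a =>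
    prod_ne_zero_iff.1 (right_ne_zero_of_mul (hrep i ▸ mul_ne_zero hi (pow_ne_zero _ ho))) a
      (mem_univ a)
  -- `o ∘ swap a b` does not vanish by symmetry, and its `a`-th factor is the one at `o b`.
  have hconst : ∀ a, f (update o a (o b)) ≠ 0 := fun a => by
    simpa using hfactor (o ∘ Equiv.swap a b) (by rwa [hsym]) a
  intro h0
  have := hrep fun _ => o b
  rw [h0, zero_mul, eq_comm, mul_eq_zero, prod_eq_zero_iff] at this
  obtain ⟨a, -, ha⟩ := this.resolve_left ho
  exact hconst a ha

theorem exists_eq_prod {K : Type*} [Field K] [IsAlgClosed K] {f : (ι → α) → K}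
    (hsym : ∀ (σ : Equiv.Perm ι) (i : ι → α), f (i ∘ σ) = f i)
    (hs : FactorsAcross f s) (hne : s.Nonempty) (hne' : sᶜ.Nonempty) :
    ∃ φ : α → K, ∀ i, f i = ∏ a, φ (i a) := by
  obtain ⟨z, hz⟩ := hne
  by_cases hf : ∀ i, f i = 0
  · exact ⟨0, fun i => by rw [hf i, prod_eq_zero (mem_univ z) rfl]⟩
  obtain ⟨o, ho⟩ := not_forall.1 hf
  obtain ⟨a, ha⟩ := hs.exists_singleton hsym ⟨z, hz⟩ hne'
  have hsingle := ha.singleton hsym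
  set c : ι → α := fun _ => o z
  have hc : f c ≠ 0 := apply_const_ne_zero hsym hsingle ho z
  -- With a constant base point, symmetry makes all local factors equal.
  have hupdate : ∀ a x, f (update c a x) = f (update c z x) := fun a x => by
    rw [← hsym (Equiv.swap a z), update_comp_equiv, Equiv.symm_swap, Equiv.swap_apply_left]
    rfl
  have hrep := mul_pow_card_eq_prod_update hsingle hc
  simp only [hupdate] at hrep
  obtain ⟨μ, hμ⟩ := IsAlgClosed.exists_pow_nat_eq (f c / f c ^ Fintype.card ι)
    (Fintype.card_pos_iff.2 ⟨z⟩)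
  refine ⟨fun x => μ * f (update c z x), fun i => ?_⟩
  rw [prod_mul_distrib, prod_const, card_univ, hμ, div_mul_eq_mul_div, eq_div_iff
    (pow_ne_zero _ hc), hrep]

end FactorsAcross

end Factorization

open Classical in
theorem Biseparable.factorsAcross {n d : ℕ} {S : Set (Fin n)}
    {ψ : EuclideanSpace ℂ (Fin n → Fin d)} (h : Biseparable S ψ) :
    FactorsAcross ψ.ofLp S.toFinset := by
  obtain ⟨φ, χ, hψ⟩ := h
  intro o _ i
  have hS : ∀ u v : Fin n → Fin d, (fun j : S => S.toFinset.piecewise u v j) = fun j : S => u j :=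
    fun u v => funext fun j => piecewise_eq_of_mem _ _ _ (Set.mem_toFinset.2 j.2)
  have hSc : ∀ u v : Fin n → Fin d,
      (fun j : ↥Sᶜ => S.toFinset.piecewise u v j) = fun j : ↥Sᶜ => v j :=
    fun u v => funext fun j => piecewise_eq_of_notMem _ _ _ (fun h => j.2 (Set.mem_toFinset.1 h))
  rw [piecewise_compl, hψ, hψ, hψ, hψ, hS, hSc, hS, hSc]
  ring

theorem SymmetricVec.exists_eq_prod_of_biseparable {n d : ℕ}
    {ψ : EuclideanSpace ℂ (Fin n → Fin d)} (hsym : SymmetricVec ψ) {S : Set (Fin n)}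
    (hS₁ : S ≠ ∅) (hS₂ : S ≠ Set.univ) (h : Biseparable S ψ) :
    ∃ φ : Fin d → ℂ, ∀ i, ψ i = ∏ j, φ (i j) := by
  obtain ⟨a, ha⟩ := Set.nonempty_iff_ne_empty.2 hS₁
  obtain ⟨b, hb⟩ := Set.nonempty_compl.2 hS₂
  exact h.factorsAcross.exists_eq_prod hsym ⟨a, by simpa⟩ ⟨b, by simpa using hb⟩

theorem symmetric_biseparable_is_product_general (n d : ℕ)
    (ψ : EuclideanSpace ℂ (Fin n → Fin d)) (hsym : SymmetricVec ψ)
    (S : Set (Fin n)) (hS₁ : S ≠ ∅) (hS₂ : S ≠ Set.univ)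
    (hbisep : Biseparable S ψ) :
    (∃ φ : Fin d → ℂ, ∀ i, ψ i = ∏ j, φ (i j)) ∧
    (∀ V : Submodule ℂ (EuclideanSpace ℂ (Fin n → Fin d)),
        (∀ v ∈ V, SymmetricVec v) → (∀ v ∈ V, FullyProduct v → v = 0) →
        ∀ v ∈ V, v ≠ 0 → GME v) := by
  refine ⟨hsym.exists_eq_prod_of_biseparable hS₁ hS₂ hbisep,
    fun V hV hV₀ v hv hv₀ => ⟨hv₀, fun T hT₁ hT₂ hT => hv₀ (hV₀ v hv ?_)⟩⟩
  obtain ⟨φ, hφ⟩ := (hV v hv).exists_eq_prod_of_biseparable hT₁ hT₂ hT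
  exact ⟨fun _ => φ, hφ⟩

/-- Proposition 3: a symmetric biseparable vector is fully product (with equal local
factors); consequently every symmetric completely entangled subspace is a genuinely
entangled subspace. -/
theorem symmetric_biseparable_is_product (n d : ℕ) (hn : 2 ≤ n) (hd : 1 ≤ d)
    (ψ : EuclideanSpace ℂ (Fin n → Fin d)) (hsym : SymmetricVec ψ)
    (S : Set (Fin n)) (hS₁ : S ≠ ∅) (hS₂ : S ≠ Set.univ)
    (hbisep : Biseparable S ψ) :
    (∃ φ : Fin d → ℂ, ∀ i, ψ i = ∏ j, φ (i j)) ∧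
    (∀ V : Submodule ℂ (EuclideanSpace ℂ (Fin n → Fin d)),
        (∀ v ∈ V, SymmetricVec v) → (∀ v ∈ V, FullyProduct v → v = 0) →
        ∀ v ∈ V, v ≠ 0 → GME v) :=
  symmetric_biseparable_is_product_general n d ψ hsym S hS₁ hS₂ hbisep
end
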